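/- Let Φ(x) := (sin(2x), sin(x)) ∈ ℝ² (a column vector), and define the 2×2 matrix-valued function Q(x) := diag(−3, 0) − 2·(d/dx)[ Φ(x)·Φ(x)ᵀ / (1 + ∫₀ˣ (sin²(2t) + sin²(t)) dt) ] for x ∈ [0,π]; explicitly, Φ(x)·Φ(x)ᵀ is the matrix with entries sin²(2x), sin(2x)·sin(x), sin(x)·sin(2x), sin²(x). Then Q is continuously differentiable and there exists x ∈ (0,π) such that Q(x)·Q'(x) ≠ Q'(x)·Q(x); in particular, the matrices Q(x), x ∈ [0,π], are not simultaneously diagonalizable. -/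

import Mathlib

/-!
Put `w(s) = 1 + ∫₀ˢ |Φ|²` and `F = w⁻¹ • Φ Φᵀ`, so that `Q = diag(-3, 0) - 2 F'` and
`Q' = -2 F''`.
Since `w' = |Φ|²` is smooth, `F` is smooth on the open set `{w > 0}`, which contains `[0, π]`
because `w ≥ 1` there. At `π/2` we have `Φ = (0, 1)`, `Φ' = (-2, 0)`, `Φ'' = (0, -1)`, `w' = 1`
and `w'' = 0`; with `a = w(π/2)⁻¹` the product rule gives `Q = [[-3, 4a], [4a, 2a²]]` and
`Q' = -2 [[8a, 4a²], [4a², 2a³ - 2a]]`, and the `(0, 1)` entry of `Q Q' - Q' Q` is `104 a² ≠ 0`.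
Simultaneously diagonalizable matrices commute, but `Q(0) = diag(-3, 0)` does not commute with
`Q(π/2)`.
-/

open Matrix MeasureTheory Set Filter

attribute [local instance] Matrix.normedAddCommGroup Matrix.normedSpace

open Real Topology
open scoped ContDiff

theorem HasDerivAt.matrix_apply {𝕜 m n : Type*} [NontriviallyNormedField 𝕜] [Fintype m]
    [Fintype n] {M : 𝕜 → Matrix m n 𝕜} {M' : Matrix m n 𝕜} {x : 𝕜} (h : HasDerivAt M M' x)
    (i : m) (j : n) : HasDerivAt (fun s => M s i j) (M' i j) x :=
  hasDerivAt_pi.1 (hasDerivAt_pi.1 h i) j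

theorem HasDerivAt.vecMulVec {𝕜 m n : Type*} [NontriviallyNormedField 𝕜] [Fintype m]
    [Fintype n] {u : 𝕜 → m → 𝕜} {v : 𝕜 → n → 𝕜} {u' : m → 𝕜} {v' : n → 𝕜} {x : 𝕜}
    (hu : HasDerivAt u u' x) (hv : HasDerivAt v v' x) :
    HasDerivAt (fun s => vecMulVec (u s) (v s)) (vecMulVec u' (v x) + vecMulVec (u x) v') x := by
  refine hasDerivAt_pi.2 fun i => hasDerivAt_pi.2 fun j => ?_
  simpa [vecMulVec_apply, add_comm] using
    (hasDerivAt_pi.1 hu i).fun_mul (hasDerivAt_pi.1 hv j)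

theorem ContDiff.vecMulVec {𝕜 m n : Type*} [NontriviallyNormedField 𝕜] [Fintype m] [Fintype n]
    {k : WithTop ℕ∞} {u : 𝕜 → m → 𝕜} {v : 𝕜 → n → 𝕜} (hu : ContDiff 𝕜 k u)
    (hv : ContDiff 𝕜 k v) : ContDiff 𝕜 k (fun s => vecMulVec (u s) (v s)) :=
  contDiff_pi' fun i => contDiff_pi' fun j => (contDiff_pi.1 hu i).mul (contDiff_pi.1 hv j)

theorem Matrix.commute_of_isDiag_conj {n R : Type*} [Fintype n] [DecidableEq n] [CommRing R]
    {U A B : Matrix n n R} (hU : IsUnit U) (hA : (U⁻¹ * A * U).IsDiag)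
    (hB : (U⁻¹ * B * U).IsDiag) : Commute A B := by
  have hdiag : Commute (U⁻¹ * A * U) (U⁻¹ * B * U) := by
    rw [← (isDiag_iff_diagonal_diag _).1 hA, ← (isDiag_iff_diagonal_diag _).1 hB]
    exact commute_diagonal _ _
  have hdet := (isUnit_iff_isUnit_det U).1 hU
  rw [commute_iff_eq]
  simpa [Matrix.mul_assoc, mul_nonsing_inv_cancel_left _ _ hdet, mul_nonsing_inv _ hdet] using
    congrArg (fun X => U * X * U⁻¹) hdiag.eq

theorem hasDerivAt_sin_const_mul (c s : ℝ) :
    HasDerivAt (fun s => sin (c * s)) (c * cos (c * s)) s := by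
  simpa [mul_comm] using ((hasDerivAt_id s).const_mul c).sin

theorem hasDerivAt_cos_const_mul (c s : ℝ) :
    HasDerivAt (fun s => cos (c * s)) (-(c * sin (c * s))) s := by
  simpa [mul_comm] using ((hasDerivAt_id s).const_mul c).cos

noncomputable section

def Φ (s : ℝ) : Fin 2 → ℝ := ![sin (2 * s), sin s]

def Φ' (s : ℝ) : Fin 2 → ℝ := ![2 * cos (2 * s), cos s]

def Φ'' (s : ℝ) : Fin 2 → ℝ := ![-(4 * sin (2 * s)), -sin s]

theorem hasDerivAt_Φ (s : ℝ) : HasDerivAt Φ (Φ' s) s := by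
  refine hasDerivAt_pi.2 fun i => ?_
  fin_cases i
  · exact hasDerivAt_sin_const_mul 2 s
  · exact hasDerivAt_sin s

theorem hasDerivAt_Φ' (s : ℝ) : HasDerivAt Φ' (Φ'' s) s := by
  refine hasDerivAt_pi.2 fun i => ?_
  fin_cases i
  · exact ((hasDerivAt_cos_const_mul 2 s).const_mul 2).congr_deriv (by simp [Φ'']; ring)
  · exact hasDerivAt_cos s

theorem contDiff_Φ : ContDiff ℝ ∞ Φ := by
  refine contDiff_pi' fun i => ?_
  fin_cases i
  · exact contDiff_sin.comp (contDiff_const.mul contDiff_id)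
  · exact contDiff_sin

def weight' (t : ℝ) : ℝ := sin (2 * t) ^ 2 + sin t ^ 2

def weight (s : ℝ) : ℝ := 1 + ∫ t in (0:ℝ)..s, weight' t

theorem continuous_weight' : Continuous weight' := by
  unfold weight'
  fun_prop

theorem hasDerivAt_weight (s : ℝ) : HasDerivAt weight (weight' s) s :=
  (continuous_weight'.integral_hasStrictDerivAt 0 s).hasDerivAt.const_add 1

theorem contDiff_weight : ContDiff ℝ ∞ weight := by
  have hderiv : deriv weight = weight' := funext fun s => (hasDerivAt_weight s).deriv
  refine contDiff_infty_iff_deriv.2 ⟨fun s => (hasDerivAt_weight s).differentiableAt, ?_⟩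
  rw [hderiv]
  unfold weight'
  fun_prop

theorem one_le_weight {s : ℝ} (hs : 0 ≤ s) : 1 ≤ weight s :=
  le_add_of_nonneg_right <| intervalIntegral.integral_nonneg hs fun t _ => by
    unfold weight'
    positivity

def rankOneTerm (s : ℝ) : Matrix (Fin 2) (Fin 2) ℝ := (weight s)⁻¹ • vecMulVec (Φ s) (Φ s)

def rankOneTerm' (s : ℝ) : Matrix (Fin 2) (Fin 2) ℝ :=
  (weight s)⁻¹ • (vecMulVec (Φ' s) (Φ s) + vecMulVec (Φ s) (Φ' s)) +
    (-weight' s / weight s ^ 2) • vecMulVec (Φ s) (Φ s)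

theorem hasDerivAt_rankOneTerm {s : ℝ} (hs : weight s ≠ 0) :
    HasDerivAt rankOneTerm (rankOneTerm' s) s :=
  ((hasDerivAt_weight s).inv hs).smul ((hasDerivAt_Φ s).vecMulVec (hasDerivAt_Φ s))

theorem contDiffOn_rankOneTerm : ContDiffOn ℝ ∞ rankOneTerm {s | 0 < weight s} :=
  (contDiff_weight.contDiffOn.inv fun _ hs => ne_of_gt hs).smul
    (contDiff_Φ.vecMulVec contDiff_Φ).contDiffOn

theorem deriv_rankOneTerm_eventuallyEq {x : ℝ} (hx : weight x ≠ 0) :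
    deriv rankOneTerm =ᶠ[𝓝 x] rankOneTerm' :=
  (contDiff_weight.continuous.continuousAt.eventually_ne hx).mono fun _ hs =>
    (hasDerivAt_rankOneTerm hs).deriv

def potential (x : ℝ) : Matrix (Fin 2) (Fin 2) ℝ :=
  !![(-3:ℝ), 0; 0, 0] - (2:ℝ) • deriv rankOneTerm x

theorem contDiffOn_potential : ContDiffOn ℝ 1 potential (Icc 0 π) := by
  have hopen : IsOpen {s | 0 < weight s} :=
    isOpen_lt continuous_const contDiff_weight.continuous
  have hderiv := contDiffOn_rankOneTerm.deriv_of_isOpen hopen (m := 1) (by norm_cast)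
  refine (contDiffOn_const.sub (hderiv.const_smul (2:ℝ))).mono fun s hs => ?_
  exact zero_lt_one.trans_le (one_le_weight hs.1)

theorem potential_eventuallyEq {x : ℝ} (hx : weight x ≠ 0) :
    potential =ᶠ[𝓝 x] fun s => !![(-3:ℝ), 0; 0, 0] - (2:ℝ) • rankOneTerm' s :=
  (deriv_rankOneTerm_eventuallyEq hx).mono fun s hs => by rw [potential, hs]

theorem hasDerivAt_potential {x : ℝ} {M : Matrix (Fin 2) (Fin 2) ℝ} (hx : weight x ≠ 0)
    (h : HasDerivAt rankOneTerm' M x) : HasDerivAt potential (-((2:ℝ) • M)) x :=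
  ((h.const_smul (2:ℝ)).const_sub _).congr_of_eventuallyEq (potential_eventuallyEq hx)

theorem potential_zero : potential 0 = !![(-3:ℝ), 0; 0, 0] := by
  have hw : weight 0 = 1 := by simp [weight]
  have hΦ : Φ 0 = 0 := by
    ext i
    fin_cases i <;> simp [Φ]
  rw [(potential_eventuallyEq (by simp [hw])).eq_of_nhds]
  simp [rankOneTerm', hΦ]

theorem Φ_pi_div_two : Φ (π / 2) = ![0, 1] := by simp [Φ, mul_div_cancel₀]

theorem Φ'_pi_div_two : Φ' (π / 2) = ![-2, 0] := by simp [Φ', mul_div_cancel₀]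

theorem Φ''_pi_div_two : Φ'' (π / 2) = ![0, -1] := by simp [Φ'', mul_div_cancel₀]

theorem weight'_pi_div_two : weight' (π / 2) = 1 := by simp [weight', mul_div_cancel₀]

theorem hasDerivAt_weight'_pi_div_two : HasDerivAt weight' 0 (π / 2) :=
  (((hasDerivAt_sin_const_mul 2 (π / 2)).fun_pow 2).fun_add
    ((hasDerivAt_sin (π / 2)).fun_pow 2)).congr_deriv (by simp [mul_div_cancel₀])

theorem weight_pi_div_two_pos : 0 < weight (π / 2) :=
  zero_lt_one.trans_le (one_le_weight (by positivity))

theorem potential_pi_div_two :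
    potential (π / 2) = !![-3, 4 * (weight (π / 2))⁻¹;
      4 * (weight (π / 2))⁻¹, 2 * (weight (π / 2))⁻¹ ^ 2] := by
  rw [(potential_eventuallyEq weight_pi_div_two_pos.ne').eq_of_nhds]
  ext i j
  fin_cases i <;> fin_cases j <;>
    simp only [rankOneTerm', Φ_pi_div_two, Φ'_pi_div_two, weight'_pi_div_two, Matrix.sub_apply,
      Matrix.add_apply, Matrix.smul_apply, vecMulVec_apply, Matrix.of_apply, Matrix.cons_val',
      Matrix.cons_val_zero, Matrix.cons_val_one, Matrix.cons_val_fin_one, Fin.zero_eta, Fin.mk_one,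
      Fin.isValue, smul_eq_mul] <;> ring

theorem hasDerivAt_rankOneTerm'_pi_div_two :
    HasDerivAt rankOneTerm'
      !![8 * (weight (π / 2))⁻¹, 4 * (weight (π / 2))⁻¹ ^ 2;
        4 * (weight (π / 2))⁻¹ ^ 2, 2 * (weight (π / 2))⁻¹ ^ 3 - 2 * (weight (π / 2))⁻¹]
      (π / 2) := by
  have hw := hasDerivAt_weight (π / 2)
  have hne := weight_pi_div_two_pos.ne'
  have hΦ := hasDerivAt_Φ (π / 2)
  have hΦ' := hasDerivAt_Φ' (π / 2)
  have hc := hasDerivAt_weight'_pi_div_two.fun_neg.fun_div (hw.fun_pow 2) (pow_ne_zero 2 hne)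
  refine (((hw.fun_inv hne).fun_smul ((hΦ'.vecMulVec hΦ).fun_add (hΦ.vecMulVec hΦ'))).fun_add
    (hc.fun_smul (hΦ.vecMulVec hΦ))).congr_deriv ?_
  ext i j
  fin_cases i <;> fin_cases j <;>
    simp only [Φ_pi_div_two, Φ'_pi_div_two, Φ''_pi_div_two, weight'_pi_div_two, Matrix.add_apply,
      Matrix.smul_apply, vecMulVec_apply, Matrix.of_apply, Matrix.cons_val', Matrix.cons_val_zero,
      Matrix.cons_val_one, Matrix.cons_val_fin_one, Fin.zero_eta, Fin.mk_one, Fin.isValue,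
      smul_eq_mul] <;>
    field_simp <;> ring

end

theorem example_potential_not_simultaneously_diagonalizable
    (Q : ℝ → Matrix (Fin 2) (Fin 2) ℝ)
    (hQ : ∀ x : ℝ, Q x = !![(-3:ℝ), 0; 0, 0] - (2:ℝ) • deriv (fun s =>
      (1 + ∫ t in (0:ℝ)..s, (Real.sin (2 * t)) ^ 2 + (Real.sin t) ^ 2)⁻¹
        • Matrix.vecMulVec ![Real.sin (2 * s), Real.sin s]
            ![Real.sin (2 * s), Real.sin s]) x)
    -- `Q'` is the entrywise derivative of `Q`
    (Q' : ℝ → Matrix (Fin 2) (Fin 2) ℝ)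
    (hQ' : ∀ x (i j : Fin 2), Q' x i j = deriv (fun s => Q s i j) x) :
    ContDiffOn ℝ 1 Q (Set.Icc 0 Real.pi) ∧
    (∃ x ∈ Set.Ioo (0:ℝ) Real.pi, Q x * Q' x ≠ Q' x * Q x) ∧
    ¬ ∃ U : Matrix (Fin 2) (Fin 2) ℝ, IsUnit U ∧
        ∀ x ∈ Set.Icc (0:ℝ) Real.pi, (U⁻¹ * Q x * U).IsDiag := by
  obtain rfl : Q = potential := funext hQ
  have hw := weight_pi_div_two_pos
  set a := (weight (π / 2))⁻¹
  have ha : a ≠ 0 := inv_ne_zero hw.ne'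
  have hQ'_eq : Q' (π / 2) = -((2:ℝ) • !![8 * a, 4 * a ^ 2; 4 * a ^ 2, 2 * a ^ 3 - 2 * a]) := by
    ext i j
    rw [hQ', ((hasDerivAt_potential hw.ne' hasDerivAt_rankOneTerm'_pi_div_two).matrix_apply
      i j).deriv]
  have hpi : π / 2 ∈ Ioo 0 π := ⟨by positivity, by linarith [pi_pos]⟩
  refine ⟨contDiffOn_potential, ⟨π / 2, hpi, fun h => ?_⟩, fun ⟨U, hU, hdiag⟩ => ?_⟩
  · have h01 : (potential (π / 2) * Q' (π / 2) - Q' (π / 2) * potential (π / 2)) 0 1 =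
        104 * a ^ 2 := by
      rw [hQ'_eq, potential_pi_div_two]
      simp only [Matrix.sub_apply, Matrix.neg_apply, Matrix.smul_apply, Matrix.mul_apply,
        Fin.sum_univ_two, Matrix.of_apply, Matrix.cons_val', Matrix.cons_val_zero,
        Matrix.cons_val_one, Matrix.cons_val_fin_one, smul_eq_mul]
      ring
    simp [h, ha] at h01
  · have h := commute_of_isDiag_conj hU (hdiag 0 ⟨le_rfl, pi_pos.le⟩)
      (hdiag (π / 2) (Ioo_subset_Icc_self hpi))
    have h10 : (potential 0 * potential (π / 2) - potential (π / 2) * potential 0) 1 0 =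
        12 * a := by
      rw [potential_zero, potential_pi_div_two]
      simp only [Matrix.sub_apply, Matrix.mul_apply, Fin.sum_univ_two, Matrix.of_apply,
        Matrix.cons_val', Matrix.cons_val_zero, Matrix.cons_val_one, Matrix.cons_val_fin_one]
      ring
    simp [h.eq, ha] at h10
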